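/- (Converse ISS small-gain theorem for expISS systems.) The interconnected system is exponentially ISS if and only if the following two conditions hold: (1) G is globally K-bounded with linear first bound, i.e. there exist w₁ > 0 and ω₂ of class K with ‖G(ξ,μ)‖ ≤ w₁‖ξ‖ + ω₂(‖μ‖) for all ξ, μ; and (2) there exist M ∈ ℕ, M ≥ 1, constants cᵢⱼ > 0 defining linear gains γᵢⱼ(s) = cᵢⱼ s, functions γᵢᵤ of class K, and functions Vᵢ : ℝ^{nᵢ} → [0,∞) with linear bounds aᵢ‖ξᵢ‖ ≤ Vᵢ(ξᵢ) ≤ bᵢ‖ξᵢ‖ (0 < aᵢ ≤ bᵢ), such that for every i, every ξ ∈ ℝⁿ and every bounded input u, Vᵢ(xᵢ(M,ξ,u)) ≤ max{ max_{j} cᵢⱼ Vⱼ(ξⱼ), γᵢᵤ(‖u‖∞) }, and the map Γ⊕ with entries γᵢⱼ satisfies the small-gain condition. -/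

import Mathlib

open scoped NNReal

/-- A function `α : ℝ≥0 → ℝ≥0` is of class K if it is continuous, strictly
increasing and vanishes at 0. -/
def ClassK (α : ℝ≥0 → ℝ≥0) : Prop :=
  Continuous α ∧ StrictMono α ∧ α 0 = 0

/-- Class K∞: class K and unbounded. -/
def ClassKInf (α : ℝ≥0 → ℝ≥0) : Prop :=
  ClassK α ∧ Filter.Tendsto α Filter.atTop Filter.atTop

/-- Class KL functions. -/
def ClassKL (β : ℝ≥0 → ℝ≥0 → ℝ≥0) : Prop :=
  (∀ t, ClassK fun s => β s t) ∧
  ∀ s, 0 < s → Continuous (β s) ∧ StrictAnti (β s) ∧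
    Filter.Tendsto (β s) Filter.atTop (nhds 0)

/-- Positive definite function on [0,∞). -/
def PosDefFun (ρ : ℝ≥0 → ℝ≥0) : Prop :=
  Continuous ρ ∧ ρ 0 = 0 ∧ ∀ s, 0 < s → 0 < ρ s

variable {E F : Type*} [NormedAddCommGroup E] [NormedAddCommGroup F]

/-- Solution map of the discrete-time system x(k+1) = G(x(k),u(k)). -/
def sol (G : E → F → E) (ξ : E) (u : ℕ → F) : ℕ → E
  | 0 => ξ
  | k + 1 => G (sol G ξ u k) (u k)

/-- A bounded input. -/
def BddInput (u : ℕ → F) : Prop := BddAbove (Set.range fun k => ‖u k‖₊)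

/-- The sup-norm ‖u‖∞ of an input. -/
noncomputable def supNorm (u : ℕ → F) : ℝ≥0 := ⨆ k, ‖u k‖₊

/-- Global K-boundedness of the dynamics. -/
def GloballyKBounded (G : E → F → E) : Prop :=
  ∃ ω₁ ω₂ : ℝ≥0 → ℝ≥0, ClassK ω₁ ∧ ClassK ω₂ ∧
    ∀ ξ μ, ‖G ξ μ‖₊ ≤ ω₁ ‖ξ‖₊ + ω₂ ‖μ‖₊

/-- Proper and positive definite function. -/
def ProperPosDef (V : E → ℝ≥0) : Prop :=
  ∃ α₁ α₂ : ℝ≥0 → ℝ≥0, ClassKInf α₁ ∧ ClassKInf α₂ ∧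
    ∀ ξ, α₁ ‖ξ‖₊ ≤ V ξ ∧ V ξ ≤ α₂ ‖ξ‖₊

/-- Dissipative finite-step ISS Lyapunov function with a prescribed step M. -/
def DissFinStepLyapAt (G : E → F → E) (V : E → ℝ≥0) (M : ℕ) : Prop :=
  ProperPosDef V ∧ 1 ≤ M ∧
  ∃ σ ρ : ℝ≥0 → ℝ≥0, ClassK σ ∧ PosDefFun ρ ∧ ClassKInf (fun s => s - ρ s) ∧
    ∀ ξ u, BddInput u → V (sol G ξ u M) ≤ ρ (V ξ) + σ (supNorm u)

/-- Dissipative finite-step ISS Lyapunov function. -/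
def DissFinStepLyap (G : E → F → E) (V : E → ℝ≥0) : Prop :=
  ∃ M, DissFinStepLyapAt G V M

/-- Input-to-state stability. -/
def ISS (G : E → F → E) : Prop :=
  ∃ β γ, ClassKL β ∧ ClassK γ ∧
    ∀ ξ u, BddInput u → ∀ k : ℕ, ‖sol G ξ u k‖₊ ≤ β ‖ξ‖₊ k + γ (supNorm u)

/-- Exponential input-to-state stability. -/
def ExpISS (G : E → F → E) : Prop :=
  ∃ (C κ : ℝ≥0) (γ : ℝ≥0 → ℝ≥0), 1 ≤ C ∧ κ < 1 ∧ ClassK γ ∧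
    ∀ ξ u, BddInput u → ∀ k : ℕ, ‖sol G ξ u k‖₊ ≤ C * κ ^ k * ‖ξ‖₊ + γ (supNorm u)


section AuxPaths
open scoped NNReal

variable {N : ℕ}

/-- Weight of a path (list of nodes). -/
private def pw (c : Fin N → Fin N → ℝ≥0) : List (Fin N) → ℝ≥0
  | [] => 1
  | [_] => 1
  | a :: b :: t => c a b * pw c (b :: t)

private lemma pw_cons_cons (c : Fin N → Fin N → ℝ≥0) (a b : Fin N) (t : List (Fin N)) :
    pw c (a :: b :: t) = c a b * pw c (b :: t) := rfl

private lemma pw_append_cons (c : Fin N → Fin N → ℝ≥0) (m : Fin N) (q : List (Fin N)) :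
    ∀ p : List (Fin N), pw c (p ++ m :: q) = pw c (p ++ [m]) * pw c (m :: q)
  | [] => by simp [pw]
  | [a] => by simp [pw_cons_cons, pw]
  | a :: b :: p => by
      have h := pw_append_cons c m q (b :: p)
      simp only [List.cons_append, pw_cons_cons] at *
      rw [h, mul_assoc]

private lemma pw_div (c : Fin N → Fin N → ℝ≥0) (θ : ℝ≥0) :
    ∀ (a : Fin N) (l : List (Fin N)),
      pw (fun i j => c i j / θ) (a :: l) = pw c (a :: l) / θ ^ l.length
  | _, [] => by simp [pw]
  | a, b :: t => by
      have h := pw_div c θ b t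
      simp only [pw_cons_cons, h, List.length_cons, pow_succ]
      rw [div_mul_div_comm]
      ring_nf

private lemma cycle_lt_one {c : Fin N → Fin N → ℝ≥0}
    (hsg : ∀ s : Fin N → ℝ≥0, s ≠ 0 → ∃ i, (Finset.univ.sup fun j => c i j * s j) < s i)
    (m : Fin N) (q : List (Fin N)) (hnd : (m :: q).Nodup) :
    pw c ((m :: q) ++ [m]) < 1 := by
  by_contra hcon
  push_neg at hcon
  set d := m :: q with hd
  classical
  set s : Fin N → ℝ≥0 := fun x =>
    if x ∈ d then pw c (d.drop (d.idxOf x) ++ [m]) else 0 with hs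
  have hmd : m ∈ d := by simp [hd]
  have hsm : s m = pw c (d ++ [m]) := by
    simp [hs, hmd, hd, List.idxOf_cons_self]
  have hsmpos : 0 < s m := lt_of_lt_of_le one_pos (hsm ▸ hcon)
  have hsne : s ≠ 0 := fun h => by simp [h] at hsmpos
  obtain ⟨i, hi⟩ := hsg s hsne
  have hsipos : 0 < s i := lt_of_le_of_lt (zero_le) hi
  have hid : i ∈ d := by
    by_contra h
    simp [hs, h] at hsipos
  have ht : d.idxOf i < d.length := List.idxOf_lt_length_iff.mpr hid
  set t := d.idxOf i with hti
  have hget : d[t] = i := List.getElem_idxOf ht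
  have hsi : s i = pw c (d.drop t ++ [m]) := by simp [hs, hid, ← hti]
  have key : ∃ j, s i ≤ c i j * s j := by
    by_cases h2 : t + 1 < d.length
    · refine ⟨d[t+1], ?_⟩
      have hdrop : d.drop t = i :: d.drop (t+1) := by
        rw [List.drop_eq_getElem_cons ht, hget]
      have hdrop2 : d.drop (t+1) = d[t+1] :: d.drop (t+2) := by
        rw [List.drop_eq_getElem_cons h2]
      have hsj : s d[t+1] = pw c (d.drop (t+1) ++ [m]) := by
        have hjd : d[t+1] ∈ d := List.getElem_mem _
        have : d.idxOf d[t+1] = t + 1 := List.Nodup.idxOf_getElem hnd _ h2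
        simp [hs, hjd, this]
      rw [hsi, hdrop, hdrop2, hsj, hdrop2]
      simp only [List.cons_append, pw_cons_cons]
      exact le_refl _
    · refine ⟨m, ?_⟩
      have hdrop : d.drop t = [i] := by
        rw [List.drop_eq_getElem_cons ht, hget]
        have : d.drop (t+1) = [] := List.drop_eq_nil_of_le (by omega)
        rw [this]
      rw [hsi, hdrop, hsm]
      have : pw c ([i] ++ [m]) = c i m := by simp [pw]
      rw [this]
      calc c i m = c i m * 1 := (mul_one _).symm
        _ ≤ c i m * pw c (d ++ [m]) := by gcongr
  obtain ⟨j, hj⟩ := key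
  have : c i j * s j ≤ Finset.univ.sup fun j => c i j * s j :=
    Finset.le_sup (f := fun j => c i j * s j) (Finset.mem_univ j)
  exact absurd (lt_of_le_of_lt (hj.trans this) hi) (lt_irrefl _)

private lemma exists_weights {c : Fin N → Fin N → ℝ≥0} (hN : 0 < N)
    (hc : ∀ i j, 0 < c i j)
    (hsg : ∀ s : Fin N → ℝ≥0, s ≠ 0 → ∃ i, (Finset.univ.sup fun j => c i j * s j) < s i) :
    ∃ (θ : ℝ≥0) (μ : Fin N → ℝ≥0), 0 < θ ∧ θ < 1 ∧ (∀ i, 1 ≤ μ i) ∧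
      (∃ B, ∀ i, μ i ≤ B) ∧ ∀ i j, c i j * μ j ≤ θ * μ i := by
  classical
  haveI : Inhabited (Fin N) := ⟨⟨0, hN⟩⟩
  have hfin : Set.Finite {l : List (Fin N) | l.Nodup} :=
    (List.finite_length_le (Fin N) N).subset
      (fun l hl => (List.Nodup.length_le_card hl).trans (by simp))
  set Scyc : Set ℝ≥0 := (fun l : List (Fin N) => pw c (l ++ [l.headI])) ''
    {l | l.Nodup ∧ l ≠ []} with hScyc
  have hScycfin : Scyc.Finite := (hfin.subset (fun l hl => hl.1)).image _
  set ρ : ℝ≥0 := sSup Scyc ⊔ 2⁻¹ with hρ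
  have hcycle_le : ∀ (m : Fin N) (q : List (Fin N)), (m :: q).Nodup →
      pw c ((m :: q) ++ [m]) ≤ ρ := by
    intro m q hnd
    refine le_trans (le_csSup hScycfin.bddAbove ?_) le_sup_left
    exact ⟨m :: q, ⟨hnd, by simp⟩, by simp⟩
  have hρ1 : ρ < 1 := by
    have h1 : sSup Scyc < 1 := by
      have hne : Scyc.Nonempty := ⟨_, ⟨[default], ⟨by simp, by simp⟩, rfl⟩⟩
      have := hne.csSup_mem hScycfin
      obtain ⟨l, ⟨hnd, hlne⟩, hl⟩ := this
      obtain ⟨m, q, rfl⟩ := List.exists_cons_of_ne_nil hlne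
      rw [← hl]
      exact cycle_lt_one hsg m q hnd
    rw [hρ]
    refine sup_lt_iff.mpr ⟨h1, ?_⟩
    rw [← NNReal.coe_lt_coe]
    norm_num
  have hρpos : 0 < ρ := lt_of_lt_of_le (by norm_num) le_sup_right
  set θ : ℝ≥0 := ρ ^ ((N : ℝ)⁻¹) with hθ
  have hθpos : 0 < θ := NNReal.rpow_pos hρpos
  have hθ1 : θ < 1 := NNReal.rpow_lt_one hρ1 (by positivity)
  have hθN : θ ^ N = ρ := by
    rw [hθ, ← NNReal.rpow_natCast (ρ ^ ((N:ℝ)⁻¹)) N, ← NNReal.rpow_mul,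
      inv_mul_cancel₀ (by exact_mod_cast hN.ne'), NNReal.rpow_one]
  set c' : Fin N → Fin N → ℝ≥0 := fun i j => c i j / θ with hc'
  have hcyc' : ∀ (m : Fin N) (q : List (Fin N)), (m :: q).Nodup →
      pw c' ((m :: q) ++ [m]) ≤ 1 := by
    intro m q hnd
    have hlen : (m :: q).length ≤ N := by
      have := List.Nodup.length_le_card hnd
      simpa using this
    have h1 : pw c' (m :: (q ++ [m])) = pw c (m :: (q ++ [m])) / θ ^ (q ++ [m]).length :=
      pw_div c θ m (q ++ [m])
    have h2 : θ ^ (q ++ [m]).length ≥ θ ^ N := by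
      apply pow_le_pow_of_le_one (zero_le) hθ1.le
      simp at hlen ⊢; omega
    rw [List.cons_append] at *
    rw [h1]
    rw [div_le_one (lt_of_lt_of_le (hθN ▸ hρpos) h2)]
    calc pw c (m :: (q ++ [m])) ≤ ρ := hcycle_le m q hnd
      _ = θ ^ N := hθN.symm
      _ ≤ θ ^ (q ++ [m]).length := h2
  set S : Fin N → Set ℝ≥0 := fun i => pw c' '' {l | l.Nodup ∧ l.head? = some i} with hS
  have hSfin : ∀ i, (S i).Finite := fun i => (hfin.subset (fun l hl => hl.1)).image _
  have hSne : ∀ i, (S i).Nonempty := fun i => ⟨_, [i], ⟨by simp, rfl⟩, rfl⟩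
  set μ : Fin N → ℝ≥0 := fun i => sSup (S i) with hμ
  have hμ1 : ∀ i, 1 ≤ μ i := by
    intro i
    have : (1 : ℝ≥0) ∈ S i := ⟨[i], ⟨by simp, rfl⟩, rfl⟩
    exact le_csSup (hSfin i).bddAbove this
  have hext : ∀ (i : Fin N) (l : List (Fin N)), l.Nodup → ∀ j t, l = j :: t →
      pw c' (i :: l) ≤ μ i := by
    intro i l hnd j t hjt
    by_cases hil : i ∈ l
    · obtain ⟨l₁, l₂, rfl⟩ := List.append_of_mem hil
      have hnd2 : l₁.Nodup ∧ (i :: l₂).Nodup ∧ l₁.Disjoint (i :: l₂) := by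
        rw [List.nodup_append] at hnd; exact ⟨hnd.1, hnd.2.1, fun a ha hb => hnd.2.2 a ha a hb rfl⟩
      have hil₁ : i ∉ l₁ := fun h => hnd2.2.2 h (by simp)
      have heq : i :: (l₁ ++ i :: l₂) = (i :: l₁) ++ i :: l₂ := by simp
      rw [heq, pw_append_cons]
      have hb1 : pw c' ((i :: l₁) ++ [i]) ≤ 1 :=
        hcyc' i l₁ (List.nodup_cons.mpr ⟨hil₁, hnd2.1⟩)
      have hb2 : pw c' (i :: l₂) ≤ μ i :=
        le_csSup (hSfin i).bddAbove ⟨i :: l₂, ⟨hnd2.2.1, rfl⟩, rfl⟩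
      calc pw c' ((i :: l₁) ++ [i]) * pw c' (i :: l₂) ≤ 1 * (μ i) := by gcongr
        _ = μ i := one_mul _
    · exact le_csSup (hSfin i).bddAbove ⟨i :: l, ⟨List.nodup_cons.mpr ⟨hil, hnd⟩, rfl⟩, rfl⟩
  refine ⟨θ, μ, hθpos, hθ1, hμ1, ⟨sSup (pw c' '' {l | l.Nodup}), fun i =>
    csSup_le_csSup (hfin.image _).bddAbove (hSne i)
      (Set.image_mono (fun l hl => hl.1))⟩, ?_⟩
  intro i j
  have hμj : μ j ∈ S j := (hSne j).csSup_mem (hSfin j)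
  obtain ⟨l, ⟨hnd, hhead⟩, hl⟩ := hμj
  obtain ⟨t, rfl⟩ : ∃ t, l = j :: t := by
    cases l with
    | nil => simp at hhead
    | cons a t => exact ⟨t, by simpa using (by simpa using hhead : a = j) ▸ rfl⟩
  have h1 : pw c' (i :: j :: t) = c' i j * pw c' (j :: t) := pw_cons_cons c' i j t
  have h2 : pw c' (i :: j :: t) ≤ μ i := hext i (j :: t) hnd j t rfl
  have hc'ij : c i j = θ * c' i j := by
    rw [hc']
    field_simp
  calc c i j * μ j = θ * (c' i j * pw c' (j :: t)) := by rw [hc'ij, hl]; ring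
    _ = θ * pw c' (i :: j :: t) := by rw [h1]
    _ ≤ θ * μ i := by gcongr

end AuxPaths

section AuxSys
open scoped NNReal
variable {E F : Type*} [NormedAddCommGroup E] [NormedAddCommGroup F]

private lemma sol_add (G : E → F → E) (ξ : E) (u : ℕ → F) (a : ℕ) :
    ∀ b, sol G ξ u (a + b) = sol G (sol G ξ u a) (fun k => u (a + k)) b
  | 0 => rfl
  | b + 1 => by
      show sol G ξ u (a + b + 1) = _
      rw [sol, sol_add G ξ u a b]
      rfl

private lemma BddInput.shift {u : ℕ → F} (hu : BddInput u) (a : ℕ) :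
    BddInput (fun k => u (a + k)) := by
  obtain ⟨B, hB⟩ := hu
  exact ⟨B, fun x ⟨k, hk⟩ => hk ▸ hB ⟨a + k, rfl⟩⟩

private lemma nnnorm_le_supNorm {u : ℕ → F} (hu : BddInput u) (k : ℕ) :
    ‖u k‖₊ ≤ supNorm u := le_ciSup hu k

private lemma supNorm_shift_le {u : ℕ → F} (hu : BddInput u) (a : ℕ) :
    supNorm (fun k => u (a + k)) ≤ supNorm u :=
  ciSup_le fun k => nnnorm_le_supNorm hu (a + k)

private lemma bridge {G : E → F → E} {w₁ : ℝ≥0} {ω₂ : ℝ≥0 → ℝ≥0} (hω : Monotone ω₂)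
    (hG : ∀ ξ μ, ‖G ξ μ‖₊ ≤ w₁ * ‖ξ‖₊ + ω₂ ‖μ‖₊) :
    ∀ (r : ℕ) (ζ : E) (u : ℕ → F), BddInput u →
      ‖sol G ζ u r‖₊ ≤ (1 ⊔ w₁) ^ r * ‖ζ‖₊ + r * (1 ⊔ w₁) ^ r * ω₂ (supNorm u) := by
  intro r
  induction r with
  | zero => intro ζ u hu; simp [sol]
  | succ r ih =>
    intro ζ u hu
    set p := 1 ⊔ w₁ with hp
    have hp1 : 1 ≤ p := le_sup_left
    calc ‖sol G ζ u (r+1)‖₊ = ‖G (sol G ζ u r) (u r)‖₊ := rfl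
      _ ≤ w₁ * ‖sol G ζ u r‖₊ + ω₂ ‖u r‖₊ := hG _ _
      _ ≤ p * (p ^ r * ‖ζ‖₊ + r * p ^ r * ω₂ (supNorm u)) + 1 * ω₂ (supNorm u) := by
          gcongr
          · exact le_sup_right
          · exact ih ζ u hu
          · rw [one_mul]; exact hω (nnnorm_le_supNorm hu r)
      _ = p ^ (r+1) * ‖ζ‖₊ + (r * p ^ (r+1) + 1) * ω₂ (supNorm u) := by ring
      _ ≤ p ^ (r+1) * ‖ζ‖₊ + (r+1 : ℕ) * p ^ (r+1) * ω₂ (supNorm u) := by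
          gcongr
          push_cast
          have h1 : (1:ℝ≥0) ≤ p ^ (r+1) := one_le_pow_of_one_le' hp1 _
          calc (r:ℝ≥0) * p ^ (r+1) + 1 ≤ r * p ^ (r+1) + p ^ (r+1) := by gcongr
            _ = (r + 1) * p ^ (r+1) := by ring

end AuxSys

/-- Converse ISS small-gain theorem for expISS systems. The
interconnected system is expISS iff G is globally K-bounded with a linear first
bound and the relaxed small-gain conditions hold with linear gains. -/
theorem expISS_iff_small_gain
    {N : ℕ} (hN : 0 < N)
    {E : Fin N → Type*} [∀ i, NormedAddCommGroup (E i)]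
    [∀ i, NormedSpace ℝ (E i)] [∀ i, FiniteDimensional ℝ (E i)]
    {F : Type*} [NormedAddCommGroup F] [NormedSpace ℝ F] [FiniteDimensional ℝ F]
    (G : (∀ i, E i) → F → (∀ i, E i)) :
    ExpISS G ↔
      ((∃ (w₁ : ℝ≥0) (ω₂ : ℝ≥0 → ℝ≥0), 0 < w₁ ∧ ClassK ω₂ ∧
          ∀ ξ μ, ‖G ξ μ‖₊ ≤ w₁ * ‖ξ‖₊ + ω₂ ‖μ‖₊) ∧
        ∃ (M : ℕ), 1 ≤ M ∧
        ∃ (c : Fin N → Fin N → ℝ≥0) (γu : Fin N → ℝ≥0 → ℝ≥0)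
          (a b : Fin N → ℝ≥0) (V : ∀ i, E i → ℝ≥0),
          (∀ i j, 0 < c i j) ∧
          (∀ i, ClassK (γu i)) ∧
          (∀ i, 0 < a i ∧ a i ≤ b i) ∧
          (∀ (i : Fin N) (ξi : E i),
            a i * ‖ξi‖₊ ≤ V i ξi ∧ V i ξi ≤ b i * ‖ξi‖₊) ∧
          (∀ (i : Fin N) (ξ : ∀ i, E i) (u : ℕ → F), BddInput u →
            V i (sol G ξ u M i) ≤
              max (Finset.univ.sup fun j => c i j * V j (ξ j))
                (γu i (supNorm u))) ∧
          (∀ s : Fin N → ℝ≥0, s ≠ 0 →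
            ∃ i, (Finset.univ.sup fun j => c i j * s j) < s i)) := by
  haveI : Nonempty (Fin N) := ⟨⟨0, hN⟩⟩
  constructor
  · rintro ⟨C, κ, γ, hC, hκ, hγ, hsol⟩
    constructor
    · refine ⟨C, γ, lt_of_lt_of_le one_pos hC, hγ, ?_⟩
      intro ξ μv
      have hb : BddInput (fun _ : ℕ => μv) := ⟨‖μv‖₊, fun x ⟨k, hk⟩ => hk ▸ le_refl _⟩
      have h := hsol ξ (fun _ => μv) hb 1
      have h1 : sol G ξ (fun _ => μv) 1 = G ξ μv := rfl
      have h2 : supNorm (fun _ : ℕ => μv) = ‖μv‖₊ := ciSup_const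
      rw [h1, h2] at h
      calc ‖G ξ μv‖₊ ≤ C * κ ^ 1 * ‖ξ‖₊ + γ ‖μv‖₊ := h
        _ ≤ C * 1 * ‖ξ‖₊ + γ ‖μv‖₊ := by gcongr; exact (pow_one κ).le.trans hκ.le
        _ = C * ‖ξ‖₊ + γ ‖μv‖₊ := by rw [mul_one]
    · have hCpos : 0 < C := lt_of_lt_of_le one_pos hC
      obtain ⟨M₀, hM₀⟩ : ∃ M₀ : ℕ, C * κ ^ M₀ ≤ 4⁻¹ := by
        obtain ⟨n, hn⟩ := exists_pow_lt_of_lt_one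
          (show (0:ℝ) < ((4 * C)⁻¹ : ℝ≥0) by
            rw [NNReal.coe_pos, inv_pos]; positivity) (show (κ:ℝ) < 1 from hκ)
        refine ⟨n, ?_⟩
        have hκn : κ ^ n ≤ (4 * C)⁻¹ := by
          rw [← NNReal.coe_le_coe]
          push_cast
          exact hn.le
        calc C * κ ^ n ≤ C * (4 * C)⁻¹ := by gcongr
          _ = 4⁻¹ := by
              rw [mul_inv, ← mul_assoc, mul_comm C 4⁻¹, mul_assoc,
                mul_inv_cancel₀ hCpos.ne', mul_one]
      set M := max M₀ 1 with hM
      have hMbound : C * κ ^ M ≤ 4⁻¹ :=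
        le_trans (mul_le_mul_right
          (pow_le_pow_of_le_one (zero_le) hκ.le (le_max_left _ _)) C) hM₀
      have h2γ : ClassK (fun s => 2 * γ s) := by
        refine ⟨continuous_const.mul hγ.1, fun s t h => ?_, by simp [hγ.2.2]⟩
        exact mul_lt_mul_of_pos_left (hγ.2.1 h) two_pos
      refine ⟨M, le_max_right _ _, fun _ _ => 2⁻¹, fun _ s => 2 * γ s,
        fun _ => 1, fun _ => 1, fun i ξi => ‖ξi‖₊,
        fun _ _ => by norm_num, fun _ => h2γ, fun _ => ⟨one_pos, le_refl _⟩,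
        fun i ξi => ⟨(one_mul _).le, (one_mul _).ge⟩, ?_, ?_⟩
      · intro i ξ u hu
        have h := hsol ξ u hu M
        have hcomp : ‖sol G ξ u M i‖₊ ≤ ‖sol G ξ u M‖₊ := nnnorm_le_pi_nnnorm _ i
        have hξ : ‖ξ‖₊ = Finset.univ.sup fun j => ‖ξ j‖₊ := Pi.nnnorm_def ξ
        obtain ⟨j₀, _, hj₀⟩ :=
          Finset.exists_mem_eq_sup Finset.univ Finset.univ_nonempty (fun j => ‖ξ j‖₊)
        have hmaxstep : ∀ x y : ℝ≥0, x + y ≤ max (2 * x) (2 * y) := by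
          intro x y
          rcases le_total x y with h' | h'
          · exact le_max_of_le_right (by rw [two_mul]; exact add_le_add h' le_rfl)
          · exact le_max_of_le_left (by rw [two_mul]; exact add_le_add le_rfl h')
        calc ‖sol G ξ u M i‖₊ ≤ C * κ ^ M * ‖ξ‖₊ + γ (supNorm u) := hcomp.trans h
          _ ≤ 4⁻¹ * ‖ξ‖₊ + γ (supNorm u) :=
              add_le_add (mul_le_mul_left hMbound _) le_rfl
          _ ≤ max (2 * (4⁻¹ * ‖ξ‖₊)) (2 * γ (supNorm u)) := hmaxstep _ _
          _ ≤ max (Finset.univ.sup fun j => 2⁻¹ * ‖ξ j‖₊) (2 * γ (supNorm u)) := by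
              refine max_le_max ?_ (le_refl _)
              have he : 2 * (4⁻¹ * ‖ξ‖₊) = 2⁻¹ * ‖ξ j₀‖₊ := by
                rw [hξ, ← hj₀]
                rw [← NNReal.coe_inj]
                push_cast
                ring
              rw [he]
              exact Finset.le_sup (f := fun j => 2⁻¹ * ‖ξ j‖₊) (Finset.mem_univ j₀)
      · intro s hs
        obtain ⟨i, _, hi⟩ := Finset.exists_mem_eq_sup Finset.univ Finset.univ_nonempty s
        have hspos : 0 < s i := by
          by_contra h
          push_neg at h
          have h0 : s i = 0 := le_antisymm h (zero_le)
          apply hs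
          funext j
          have : s j ≤ s i := hi ▸ Finset.le_sup (Finset.mem_univ j)
          simpa [h0] using le_antisymm (this.trans h0.le) (zero_le)
        refine ⟨i, ?_⟩
        have hsup : (Finset.univ.sup fun j => 2⁻¹ * s j) ≤ 2⁻¹ * s i :=
          Finset.sup_le fun j _ => by
            gcongr
            exact hi ▸ Finset.le_sup (Finset.mem_univ j)
        have hh := NNReal.half_lt_self hspos.ne'
        rw [div_eq_mul_inv, mul_comm] at hh
        exact lt_of_le_of_lt hsup hh
  · rintro ⟨⟨w₁, ω₂, hw₁, hω₂, hG⟩, M, hM, c, γu, a, b, V, hc, hγu, hab, hV, hLyap, hsg⟩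
    classical
    obtain ⟨θ, μ, hθpos, hθ1, hμ1, ⟨Bμ, hBμ⟩, hcontr⟩ := exists_weights hN hc hsg
    have hμne : ∀ i, μ i ≠ 0 := fun i => (lt_of_lt_of_le one_pos (hμ1 i)).ne'
    set W : (∀ i, E i) → ℝ≥0 := fun ξ => Finset.univ.sup fun i => V i (ξ i) / μ i with hW
    have hγum : ∀ i, Monotone (γu i) := fun i => (hγu i).2.1.monotone
    have hω₂m : Monotone ω₂ := hω₂.2.1.monotone
    -- one step of the Lyapunov max estimate
    have hstep : ∀ ξ u, BddInput u →
        W (sol G ξ u M) ≤ max (θ * W ξ) (∑ i, γu i (supNorm u)) := by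
      intro ξ u hu
      refine Finset.sup_le fun i _ => ?_
      rw [div_le_iff₀ (pos_iff_ne_zero.mpr (hμne i))]
      refine le_trans (hLyap i ξ u hu) (max_le ?_ ?_)
      · refine le_trans (Finset.sup_le fun j _ => ?_)
          (mul_le_mul_left (le_max_left _ _) (μ i))
        have hVj : V j (ξ j) ≤ W ξ * μ j := by
          rw [← div_le_iff₀ (pos_iff_ne_zero.mpr (hμne j))]
          exact Finset.le_sup (f := fun j => V j (ξ j) / μ j) (Finset.mem_univ j)
        calc c i j * V j (ξ j) ≤ c i j * (W ξ * μ j) := by gcongr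
          _ = (c i j * μ j) * W ξ := by ring
          _ ≤ (θ * μ i) * W ξ := mul_le_mul_left (hcontr i j) (W ξ)
          _ = θ * W ξ * μ i := by ring
      · calc γu i (supNorm u) ≤ ∑ j, γu j (supNorm u) :=
              Finset.single_le_sum (f := fun j => γu j (supNorm u))
                (fun j _ => zero_le) (Finset.mem_univ i)
          _ ≤ max (θ * W ξ) (∑ j, γu j (supNorm u)) := le_max_right _ _
          _ ≤ _ * μ i := le_mul_of_one_le_right (zero_le) (hμ1 i)
    -- iterate the step
    have hiter : ∀ (k : ℕ) (ξ : ∀ i, E i) (u : ℕ → F), BddInput u →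
        W (sol G ξ u (M * k)) ≤ max (θ ^ k * W ξ) (∑ i, γu i (supNorm u)) := by
      intro k
      induction k with
      | zero => intro ξ u hu; simp [sol]
      | succ k ih =>
        intro ξ u hu
        have hadd : sol G ξ u (M * (k+1)) =
            sol G (sol G ξ u (M * k)) (fun t => u (M * k + t)) M := by
          rw [show M * (k+1) = M * k + M by ring]
          exact sol_add G ξ u (M * k) M
        rw [hadd]
        have h1 := hstep (sol G ξ u (M * k)) (fun t => u (M * k + t)) (hu.shift _)
        have hsum : (∑ i, γu i (supNorm fun t => u (M * k + t))) ≤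
            ∑ i, γu i (supNorm u) :=
          Finset.sum_le_sum fun i _ => hγum i (supNorm_shift_le hu _)
        refine le_trans h1 (max_le ?_ (hsum.trans (le_max_right _ _)))
        have h2 : θ * W (sol G ξ u (M * k)) ≤
            θ * max (θ ^ k * W ξ) (∑ i, γu i (supNorm u)) :=
          mul_le_mul_right (ih ξ u hu) θ
        refine h2.trans ?_
        rcases max_cases (θ ^ k * W ξ) (∑ i, γu i (supNorm u)) with ⟨he, _⟩ | ⟨he, _⟩
        · rw [he]
          exact le_max_of_le_left (le_of_eq (by ring))
        · rw [he]
          exact le_max_of_le_right (mul_le_of_le_one_left (zero_le) hθ1.le)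
    -- relate W to norms
    have huniv : (Finset.univ : Finset (Fin N)).Nonempty := Finset.univ_nonempty
    set amin : ℝ≥0 := Finset.univ.inf' huniv a with hamin
    set bmax : ℝ≥0 := Finset.univ.sup b with hbmax
    have haminpos : 0 < amin := by
      rw [hamin, Finset.lt_inf'_iff]
      exact fun i _ => (hab i).1
    have hBμ1 : (1:ℝ≥0) ≤ Bμ := le_trans (hμ1 ⟨0, hN⟩) (hBμ _)
    have hWlow : ∀ ξ : ∀ i, E i, amin * ‖ξ‖₊ ≤ Bμ * W ξ := by
      intro ξ
      have hξ : ‖ξ‖₊ = Finset.univ.sup fun j => ‖ξ j‖₊ := Pi.nnnorm_def ξ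
      obtain ⟨i₀, _, hi₀⟩ := Finset.exists_mem_eq_sup Finset.univ huniv (fun j => ‖ξ j‖₊)
      have h1 : V i₀ (ξ i₀) = (V i₀ (ξ i₀) / μ i₀) * μ i₀ := (div_mul_cancel₀ _ (hμne i₀)).symm
      calc amin * ‖ξ‖₊ = amin * ‖ξ i₀‖₊ := by rw [hξ, ← hi₀]
        _ ≤ a i₀ * ‖ξ i₀‖₊ := by
            gcongr
            exact Finset.inf'_le _ (Finset.mem_univ i₀)
        _ ≤ V i₀ (ξ i₀) := (hV i₀ (ξ i₀)).1
        _ = (V i₀ (ξ i₀) / μ i₀) * μ i₀ := h1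
        _ ≤ W ξ * Bμ := by
            gcongr
            · exact Finset.le_sup (f := fun j => V j (ξ j) / μ j) (Finset.mem_univ i₀)
            · exact hBμ i₀
        _ = Bμ * W ξ := mul_comm _ _
    have hWup : ∀ ξ : ∀ i, E i, W ξ ≤ bmax * ‖ξ‖₊ := by
      intro ξ
      refine Finset.sup_le fun i _ => ?_
      rw [div_le_iff₀ (pos_iff_ne_zero.mpr (hμne i))]
      calc V i (ξ i) ≤ b i * ‖ξ i‖₊ := (hV i (ξ i)).2
        _ ≤ bmax * ‖ξ‖₊ := by
            gcongr
            · exact Finset.le_sup (Finset.mem_univ i)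
            · exact nnnorm_le_pi_nnnorm ξ i
        _ ≤ bmax * ‖ξ‖₊ * μ i := le_mul_of_one_le_right (zero_le) (hμ1 i)
    -- final assembly
    set p : ℝ≥0 := 1 ⊔ w₁ with hp
    have hp1 : (1:ℝ≥0) ≤ p := le_sup_left
    set P : ℝ≥0 := p ^ M with hP
    have hP1 : (1:ℝ≥0) ≤ P := one_le_pow_of_one_le' hp1 M
    have hMpos : 0 < M := hM
    set κ' : ℝ≥0 := θ ^ ((M:ℝ)⁻¹) with hκ'
    have hκ'1 : κ' < 1 := NNReal.rpow_lt_one hθ1 (by positivity)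
    have hκ'M : κ' ^ M = θ := by
      rw [hκ', ← NNReal.rpow_natCast (θ ^ ((M:ℝ)⁻¹)) M, ← NNReal.rpow_mul,
        inv_mul_cancel₀ (by exact_mod_cast hMpos.ne'), NNReal.rpow_one]
    set A : ℝ≥0 := Bμ * amin⁻¹ with hA
    have hApos : 0 < A :=
      mul_pos (lt_of_lt_of_le one_pos hBμ1) (by positivity)
    have hnormW : ∀ ζ : ∀ i, E i, ‖ζ‖₊ ≤ A * W ζ := by
      intro ζ
      calc ‖ζ‖₊ = amin⁻¹ * (amin * ‖ζ‖₊) := by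
            rw [← mul_assoc, inv_mul_cancel₀ haminpos.ne', one_mul]
        _ ≤ amin⁻¹ * (Bμ * W ζ) := mul_le_mul_right (hWlow ζ) _
        _ = A * W ζ := by rw [hA]; ring
    have hPApos : 0 < P * A := mul_pos (lt_of_lt_of_le one_pos hP1) hApos
    have hMPpos : 0 < (M:ℝ≥0) * P := by
      refine mul_pos ?_ (lt_of_lt_of_le one_pos hP1)
      exact_mod_cast hMpos
    refine ⟨1 ⊔ (P * A * bmax * θ⁻¹), κ',
      fun s => P * A * (∑ i, γu i s) + ((M:ℝ≥0) * P) * ω₂ s,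
      le_sup_left, hκ'1, ⟨?_, ?_, ?_⟩, ?_⟩
    · exact (continuous_const.mul (continuous_finset_sum _ fun i _ => (hγu i).1)).add
        (continuous_const.mul hω₂.1)
    · intro s t hst
      have h1 : (∑ i, γu i s) < ∑ i, γu i t :=
        Finset.sum_lt_sum_of_nonempty huniv fun i _ => (hγu i).2.1 hst
      exact add_lt_add (mul_lt_mul_of_pos_left h1 hPApos)
        (mul_lt_mul_of_pos_left (hω₂.2.1 hst) hMPpos)
    · simp [fun i => (hγu i).2.2, hω₂.2.2]
    · intro ξ u hu k
      set q := k / M with hq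
      set r := k % M with hr
      have hkeq : M * q + r = k := Nat.div_add_mod k M
      have hrM : r < M := Nat.mod_lt _ hMpos
      set ζ := sol G ξ u (M * q) with hζ
      have h1 : sol G ξ u k = sol G ζ (fun t => u (M * q + t)) r := by
        rw [← hkeq]; exact sol_add G ξ u (M * q) r
      have hbr := bridge hω₂m hG r ζ (fun t => u (M * q + t)) (hu.shift _)
      have hpr : p ^ r ≤ P := pow_le_pow_right₀ hp1 hrM.le
      have hrpr : (r:ℝ≥0) * p ^ r ≤ (M:ℝ≥0) * P :=
        mul_le_mul' (by exact_mod_cast hrM.le) hpr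
      have hω₂s : ω₂ (supNorm fun t => u (M * q + t)) ≤ ω₂ (supNorm u) :=
        hω₂m (supNorm_shift_le hu _)
      have hζn : ‖ζ‖₊ ≤ A * (θ ^ q * (bmax * ‖ξ‖₊)) + A * (∑ i, γu i (supNorm u)) := by
        calc ‖ζ‖₊ ≤ A * W ζ := hnormW ζ
          _ ≤ A * (θ ^ q * W ξ + ∑ i, γu i (supNorm u)) := by
              refine mul_le_mul_right (le_trans (hiter q ξ u hu) ?_) A
              exact max_le_add_of_nonneg (zero_le) (zero_le)
          _ = A * (θ ^ q * W ξ) + A * (∑ i, γu i (supNorm u)) := by ring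
          _ ≤ A * (θ ^ q * (bmax * ‖ξ‖₊)) + A * (∑ i, γu i (supNorm u)) := by
              gcongr
              exact hWup ξ
      have hθq : θ ^ q ≤ κ' ^ k * θ⁻¹ := by
        have h2 : θ ^ (q + 1) ≤ κ' ^ k := by
          have hkle : k ≤ M * (q + 1) := by
            rw [← hkeq, Nat.mul_succ]
            exact Nat.add_le_add_left hrM.le _
          rw [← hκ'M, ← pow_mul]
          exact pow_le_pow_of_le_one (zero_le) hκ'1.le hkle
        calc θ ^ q = θ ^ (q + 1) * θ⁻¹ := by
              rw [pow_succ, mul_assoc, mul_inv_cancel₀ hθpos.ne', mul_one]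
          _ ≤ κ' ^ k * θ⁻¹ := mul_le_mul_left h2 _
      rw [h1]
      calc ‖sol G ζ (fun t => u (M * q + t)) r‖₊
          ≤ p ^ r * ‖ζ‖₊ + r * p ^ r * ω₂ (supNorm fun t => u (M * q + t)) := hbr
        _ ≤ P * (A * (θ ^ q * (bmax * ‖ξ‖₊)) + A * (∑ i, γu i (supNorm u))) +
            ((M:ℝ≥0) * P) * ω₂ (supNorm u) :=
            add_le_add (mul_le_mul' hpr hζn) (mul_le_mul' hrpr hω₂s)
        _ = (P * A * bmax) * θ ^ q * ‖ξ‖₊ +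
            (P * A * (∑ i, γu i (supNorm u)) + ((M:ℝ≥0) * P) * ω₂ (supNorm u)) := by
            ring
        _ ≤ (P * A * bmax) * (κ' ^ k * θ⁻¹) * ‖ξ‖₊ +
            (P * A * (∑ i, γu i (supNorm u)) + ((M:ℝ≥0) * P) * ω₂ (supNorm u)) := by
            gcongr
        _ = (P * A * bmax * θ⁻¹) * κ' ^ k * ‖ξ‖₊ +
            (P * A * (∑ i, γu i (supNorm u)) + ((M:ℝ≥0) * P) * ω₂ (supNorm u)) := by
            ring
        _ ≤ (1 ⊔ (P * A * bmax * θ⁻¹)) * κ' ^ k * ‖ξ‖₊ +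
            (P * A * (∑ i, γu i (supNorm u)) + ((M:ℝ≥0) * P) * ω₂ (supNorm u)) := by
            gcongr
            exact le_sup_right
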